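/- Every Σ₁-definable language over Σ (i.e., a language defined by a first-order sentence of the form ∃x₁…∃xₙ ψ with ψ quantifier-free) is ADT₀-definable. -/

import Mathlib

namespace ADTpaper

/-- Propositional formulas over a set `P` of propositional variables. -/
inductive PropForm (P : Type) : Type where
  | var : P → PropForm P
  | tru : PropForm P
  | fls : PropForm P
  | neg : PropForm P → PropForm P
  | conj : PropForm P → PropForm P → PropForm P
  | disj : PropForm P → PropForm P → PropForm P

/-- A valuation is a subset of `P` (an element of the alphabet `Σ = 2^P`). -/
abbrev Val (P : Type) : Type := Set P

/-- A trace is a finite word over the alphabet `Σ = 2^P`. -/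
abbrev Trace (P : Type) : Type := List (Val P)

/-- Satisfaction of a propositional formula by a valuation. -/
def PropForm.eval {P : Type} (v : Val P) : PropForm P → Prop
  | .var p => p ∈ v
  | .tru => True
  | .fls => False
  | .neg φ => ¬ PropForm.eval v φ
  | .conj φ ψ => PropForm.eval v φ ∧ PropForm.eval v ψ
  | .disj φ ψ => PropForm.eval v φ ∨ PropForm.eval v ψ

/-- Size of a propositional formula. -/
def PropForm.size {P : Type} : PropForm P → ℕ
  | .var _ => 1
  | .tru => 1
  | .fls => 1
  | .neg φ => PropForm.size φ + 1
  | .conj φ ψ => PropForm.size φ + PropForm.size ψ + 1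
  | .disj φ ψ => PropForm.size φ + PropForm.size ψ + 1

/-- Attack-defense trees over `P` (operators taken binary, w.l.o.g. by associativity). -/
inductive ADT (P : Type) : Type where
  | eps  : ADT P
  | leaf : PropForm P → ADT P
  | orA  : ADT P → ADT P → ADT P
  | sand : ADT P → ADT P → ADT P
  | andA : ADT P → ADT P → ADT P
  | cm   : ADT P → ADT P → ADT P

/-- Trace semantics of an adt: a language over the alphabet `Σ = 2^P`. -/
def sem {P : Type} : ADT P → Language (Val P)
  | .eps => 1
  | .leaf γ => {w | ∃ w' v, w = w' ++ [v] ∧ PropForm.eval v γ}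
  | .orA t₁ t₂ => sem t₁ ⊔ sem t₂
  | .sand t₁ t₂ => sem t₁ * sem t₂
  | .andA t₁ t₂ => (sem t₁ * ⊤ ⊓ sem t₂) ⊔ (sem t₂ * ⊤ ⊓ sem t₁)
  | .cm t₁ t₂ => sem t₁ \ sem t₂

/-- Countermeasure-depth of an adt. -/
def cd {P : Type} : ADT P → ℕ
  | .eps => 0
  | .leaf _ => 0
  | .orA t₁ t₂ => max (cd t₁) (cd t₂)
  | .sand t₁ t₂ => max (cd t₁) (cd t₂)
  | .andA t₁ t₂ => max (cd t₁) (cd t₂)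
  | .cm t₁ t₂ => max (cd t₁) (cd t₂ + 1)

/-- The size of an adt: the sum of the sizes of its leaves, the leaf `ε` having size 1. -/
def ADT.size {P : Type} : ADT P → ℕ
  | .eps => 1
  | .leaf γ => PropForm.size γ
  | .orA t₁ t₂ => ADT.size t₁ + ADT.size t₂
  | .sand t₁ t₂ => ADT.size t₁ + ADT.size t₂
  | .andA t₁ t₂ => ADT.size t₁ + ADT.size t₂
  | .cm t₁ t₂ => ADT.size t₁ + ADT.size t₂


/-- First-order logic on finite words over alphabet `α`: for each letter `a` a unary
predicate `a(x)` ("the letter at position `x` is `a`") and the binary predicate `x < y`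
on positions. Variables are indexed by natural numbers. -/
inductive FO (α : Type) : Type where
  | letter : α → ℕ → FO α
  | lt : ℕ → ℕ → FO α
  | neg : FO α → FO α
  | conj : FO α → FO α → FO α
  | disj : FO α → FO α → FO α
  | ex : ℕ → FO α → FO α
  | all : ℕ → FO α → FO α

/-- Satisfaction of an FO formula in a finite word `w`, with assignment `ρ` of the
variables to positions (positions of `w` are `0, …, w.length - 1`). -/
def FO.sat {α : Type} (w : List α) (ρ : ℕ → ℕ) : FO α → Prop
  | .letter a x => w[ρ x]? = some a
  | .lt x y => ρ x < ρ y
  | .neg φ => ¬ FO.sat w ρ φ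
  | .conj φ ψ => FO.sat w ρ φ ∧ FO.sat w ρ ψ
  | .disj φ ψ => FO.sat w ρ φ ∨ FO.sat w ρ ψ
  | .ex x φ => ∃ i, i < w.length ∧ FO.sat w (Function.update ρ x i) φ
  | .all x φ => ∀ i, i < w.length → FO.sat w (Function.update ρ x i) φ

/-- Size of an FO formula (its length as an expression). -/
def FO.size {α : Type} : FO α → ℕ
  | .letter _ _ => 1
  | .lt _ _ => 1
  | .neg φ => FO.size φ + 1
  | .conj φ ψ => FO.size φ + FO.size ψ + 1
  | .disj φ ψ => FO.size φ + FO.size ψ + 1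
  | .ex _ φ => FO.size φ + 1
  | .all _ φ => FO.size φ + 1

/-- `φ` defines the language `L`: a word belongs to `L` iff it satisfies `φ`
(under every assignment; in particular `φ` behaves as a sentence). -/
def FODefines {α : Type} (φ : FO α) (L : Language α) : Prop :=
  ∀ (w : List α) (ρ : ℕ → ℕ), w ∈ L ↔ FO.sat w ρ φ

/-- Quantifier-free FO formulas. -/
inductive QF {α : Type} : FO α → Prop where
  | letter (a : α) (x : ℕ) : QF (FO.letter a x)
  | lt (x y : ℕ) : QF (FO.lt x y)
  | neg {φ} : QF φ → QF (FO.neg φ)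
  | conj {φ ψ} : QF φ → QF ψ → QF (FO.conj φ ψ)
  | disj {φ ψ} : QF φ → QF ψ → QF (FO.disj φ ψ)

mutual
  /-- `SigmaFO ℓ φ`: `φ` has at most `ℓ` alternating blocks of quantifiers,
  starting with a block of `∃`. -/
  inductive SigmaFO {α : Type} : ℕ → FO α → Prop where
    | qf {n : ℕ} {φ : FO α} : QF φ → SigmaFO n φ
    | ofPi {n : ℕ} {φ : FO α} : PiFO n φ → SigmaFO (n + 1) φ
    | ex {n x : ℕ} {φ : FO α} : SigmaFO (n + 1) φ → SigmaFO (n + 1) (FO.ex x φ)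

  /-- `PiFO ℓ φ`: `φ` has at most `ℓ` alternating blocks of quantifiers,
  starting with a block of `∀`. -/
  inductive PiFO {α : Type} : ℕ → FO α → Prop where
    | qf {n : ℕ} {φ : FO α} : QF φ → PiFO n φ
    | ofSigma {n : ℕ} {φ : FO α} : SigmaFO n φ → PiFO (n + 1) φ
    | all {n x : ℕ} {φ : FO α} : PiFO (n + 1) φ → PiFO (n + 1) (FO.all x φ)
end

/-- A language is `Σ_ℓ`-definable if it is defined by some `Σ_ℓ` sentence. -/
def SigmaDefinable {α : Type} (ℓ : ℕ) (L : Language α) : Prop :=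
  ∃ φ : FO α, SigmaFO ℓ φ ∧ FODefines φ L

/-- A language is `Π_ℓ`-definable if it is defined by some `Π_ℓ` sentence. -/
def PiDefinable {α : Type} (ℓ : ℕ) (L : Language α) : Prop :=
  ∃ φ : FO α, PiFO ℓ φ ∧ FODefines φ L

end ADTpaper

/-!
A quantifier-free formula only sees the letters at, and the relative order of, the positions
its variables name, and both are preserved by the order embedding of a subword into a word.
Hence a `Σ₁` sentence `∃ x₁ … ∃ xₙ, ψ` holds in a word iff it holds in the subword made of its
(at most `n`) witness positions, and a `Σ₁`-definable language is the finite union of the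
superword closures of its words of length at most `n`. The superword closure of `a₁ ⋯ aₖ` is
`Σ* a₁ ⋯ Σ* aₖ Σ*`, the semantics of `SAND(a₁, …, aₖ, OR(ε, ⊤))` when the leaf `aᵢ` is a
propositional formula satisfied by the valuation `aᵢ` alone.
-/

variable {α : Type}

theorem List.lt_length_iff_of_getElem?_eq {u w : List α} {f : ℕ → ℕ}
    (hf : ∀ i, u[i]? = w[f i]?) {i : ℕ} : i < u.length ↔ f i < w.length := by
  rw [← not_le, ← not_le, ← List.getElem?_eq_none_iff, ← List.getElem?_eq_none_iff, hf]

theorem List.exists_orderEmbedding_of_finset (w : List α) (T : Finset ℕ)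
    (hT : ∀ i ∈ T, i < w.length) :
    ∃ (u : List α) (f : ℕ ↪o ℕ), (∀ i, u[i]? = w[f i]?) ∧ u.length = T.card ∧
      ↑T ∪ Set.Ici w.length ⊆ Set.range f := by
  set e := T.orderEmbOfFin rfl
  have he : ∀ j, e j < w.length := fun j => hT _ (T.orderEmbOfFin_mem rfl j)
  let g : ℕ → ℕ := fun j => if h : j < T.card then e ⟨j, h⟩ else w.length + (j - T.card)
  have hg : StrictMono g := by
    intro i j hij
    simp only [g]
    split_ifs with hi hj hj
    · exact e.strictMono (Fin.mk_lt_mk.2 hij)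
    · have := he ⟨i, hi⟩
      omega
    · omega
    · omega
  refine ⟨List.ofFn fun j => w[e j]'(he j), OrderEmbedding.ofStrictMono g hg, ?_, by simp, ?_⟩
  · intro i
    simp only [List.getElem?_ofFn, OrderEmbedding.coe_ofStrictMono, g]
    split_ifs with hi
    · simp [List.getElem?_eq_getElem (he _)]
    · exact (List.getElem?_eq_none (by omega)).symm
  · rintro i (hi | hi)
    · obtain ⟨j, rfl⟩ : i ∈ Set.range e := by rwa [Finset.range_orderEmbOfFin]
      exact ⟨j, by simp [g, j.2]⟩
    · refine ⟨T.card + (i - w.length), ?_⟩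
      simp only [OrderEmbedding.coe_ofStrictMono, g, Set.mem_Ici] at hi ⊢
      rw [dif_neg (by omega)]
      omega

namespace ADTpaper

theorem QF.sat_iff_sat_comp {ψ : FO α} (hψ : QF ψ) {u w : List α} (f : ℕ ↪o ℕ)
    (hf : ∀ i, u[i]? = w[f i]?) (ρ : ℕ → ℕ) :
    FO.sat u ρ ψ ↔ FO.sat w (f ∘ ρ) ψ := by
  induction hψ with
  | letter a x => simp only [FO.sat, hf, Function.comp_apply]
  | lt x y => simp only [FO.sat, Function.comp_apply, f.lt_iff_lt]
  | neg _ ih => simp only [FO.sat, ih]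
  | conj _ _ ih₁ ih₂ => simp only [FO.sat, ih₁, ih₂]
  | disj _ _ ih₁ ih₂ => simp only [FO.sat, ih₁, ih₂]

theorem SigmaFO.qf_or_eq_ex_of_one {φ : FO α} (h : SigmaFO 1 φ) :
    QF φ ∨ ∃ x ψ, φ = FO.ex x ψ ∧ SigmaFO 1 ψ := by
  rcases h with hq | ⟨⟨hq⟩⟩ | h
  · exact .inl hq
  · exact .inl hq
  · exact .inr ⟨_, _, rfl, h⟩

theorem SigmaFO.exists_eq_foldr_ex {φ : FO α} (h : SigmaFO 1 φ) :
    ∃ (xs : List ℕ) (ψ : FO α), QF ψ ∧ φ = xs.foldr FO.ex ψ := by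
  induction φ with
  | ex x φ ih =>
    rcases h.qf_or_eq_ex_of_one with hq | ⟨_, _, ⟨⟩, h⟩
    · exact ⟨[], _, hq, rfl⟩
    · obtain ⟨xs, ψ, hψ, rfl⟩ := ih h
      exact ⟨x :: xs, ψ, hψ, rfl⟩
  | _ =>
    rcases h.qf_or_eq_ex_of_one with hq | ⟨_, _, ⟨⟩, _⟩
    exact ⟨[], _, hq, rfl⟩

theorem FO.sat_foldr_ex_iff {w : List α} {ρ : ℕ → ℕ} (xs : List ℕ) (ψ : FO α) :
    FO.sat w ρ (xs.foldr FO.ex ψ) ↔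
      ∃ ρ', (∀ x ∈ xs, ρ' x < w.length) ∧ (∀ x ∉ xs, ρ' x = ρ x) ∧ FO.sat w ρ' ψ := by
  induction xs generalizing ρ with
  | nil =>
    simp only [List.foldr_nil, List.not_mem_nil, IsEmpty.forall_iff, implies_true,
      not_false_eq_true, forall_const, true_and]
    exact ⟨fun h => ⟨ρ, fun _ => rfl, h⟩, fun ⟨ρ', hρ', h⟩ => funext hρ' ▸ h⟩
  | cons x xs ih =>
    simp only [List.foldr_cons, FO.sat, ih, List.mem_cons, not_or]
    constructor
    · rintro ⟨i, hi, ρ', hlt, heq, hψ⟩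
      refine ⟨ρ', fun y hy => ?_, fun y hy => ?_, hψ⟩
      · by_cases hys : y ∈ xs
        · exact hlt y hys
        · rcases hy with rfl | hy
          · simpa [heq y hys] using hi
          · exact absurd hy hys
      · rw [heq y hy.2, Function.update_of_ne hy.1]
    · rintro ⟨ρ', hlt, heq, hψ⟩
      refine ⟨ρ' x, hlt x (.inl rfl), ρ', fun y hy => hlt y (.inr hy), fun y hy => ?_, hψ⟩
      by_cases hyx : y = x
      · subst hyx
        simp
      · rw [Function.update_of_ne hyx, heq y ⟨hyx, hy⟩]

theorem QF.sat_foldr_ex_comp {ψ : FO α} (hψ : QF ψ) (xs : List ℕ) {u w : List α}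
    (f : ℕ ↪o ℕ) (hf : ∀ i, u[i]? = w[f i]?) {ρ : ℕ → ℕ}
    (h : FO.sat u ρ (xs.foldr FO.ex ψ)) : FO.sat w (f ∘ ρ) (xs.foldr FO.ex ψ) := by
  obtain ⟨ρ', hlt, heq, hsat⟩ := (FO.sat_foldr_ex_iff xs ψ).1 h
  refine (FO.sat_foldr_ex_iff xs ψ).2 ⟨f ∘ ρ', fun x hx => ?_, fun x hx => ?_, ?_⟩
  · exact (List.lt_length_iff_of_getElem?_eq hf).1 (hlt x hx)
  · exact congrArg f (heq x hx)
  · exact (hψ.sat_iff_sat_comp f hf ρ').1 hsat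

theorem QF.exists_short_sublist_sat_foldr_ex {ψ : FO α} (hψ : QF ψ) (xs : List ℕ)
    {w : List α} (h : FO.sat w (fun _ => w.length) (xs.foldr FO.ex ψ)) :
    ∃ u, u.Sublist w ∧ u.length ≤ xs.length ∧ ∃ ρ, FO.sat u ρ (xs.foldr FO.ex ψ) := by
  obtain ⟨ρ', hlt, heq, hsat⟩ := (FO.sat_foldr_ex_iff xs ψ).1 h
  obtain ⟨u, f, hf, hlen, hrange⟩ :=
    w.exists_orderEmbedding_of_finset (xs.toFinset.image ρ') (by simpa using hlt)
  -- The free variables sit at `w.length`, just past `w`, which `f` reaches from past `u`.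
  have hρ' : ∀ x, ρ' x ∈ Set.range f := fun x => hrange <| by
    by_cases hx : x ∈ xs
    · exact .inl (by simpa using ⟨x, hx, rfl⟩)
    · exact .inr (heq x hx).ge
  choose ρ hρ using hρ'
  have hρ'_eq : ρ' = f ∘ ρ := funext fun x => (hρ x).symm
  refine ⟨u, List.sublist_iff_exists_orderEmbedding_getElem?_eq.2 ⟨f, hf⟩, ?_, ρ, ?_⟩
  · exact hlen ▸ Finset.card_image_le.trans (List.toFinset_card_le xs)
  · refine (FO.sat_foldr_ex_iff xs ψ).2 ⟨ρ, fun x hx => ?_, fun _ _ => rfl, ?_⟩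
    · exact (List.lt_length_iff_of_getElem?_eq hf).2 (hρ x ▸ hlt x hx)
    · exact (hψ.sat_iff_sat_comp f hf ρ).2 (hρ'_eq ▸ hsat)

theorem SigmaDefinable.exists_mem_iff_exists_short_sublist {L : Language α}
    (hL : SigmaDefinable 1 L) :
    ∃ n, ∀ w, w ∈ L ↔ ∃ u ∈ L, u.length ≤ n ∧ u.Sublist w := by
  obtain ⟨φ, hφ, hdef⟩ := hL
  obtain ⟨xs, ψ, hψ, rfl⟩ := hφ.exists_eq_foldr_ex
  refine ⟨xs.length, fun w => ⟨fun hw => ?_, ?_⟩⟩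
  · obtain ⟨u, hu, hlen, ρ, hsat⟩ :=
      hψ.exists_short_sublist_sat_foldr_ex xs ((hdef w _).1 hw)
    exact ⟨u, (hdef u ρ).2 hsat, hlen, hu⟩
  · rintro ⟨u, hu, -, hsub⟩
    obtain ⟨f, hf⟩ := List.sublist_iff_exists_orderEmbedding_getElem?_eq.1 hsub
    exact (hdef w (f ∘ id)).2 (hψ.sat_foldr_ex_comp xs f hf ((hdef u id).1 hu))

def superwords (u : List α) : Language α :=
  {w | u.Sublist w}

theorem mem_superwords {u w : List α} : w ∈ superwords u ↔ u.Sublist w :=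
  Iff.rfl

variable {P : Type}

def ADT0Definable (L : Language (Val P)) : Prop :=
  ∃ t : ADT P, cd t = 0 ∧ sem t = L

theorem adt0Definable_bot : ADT0Definable (⊥ : Language (Val P)) :=
  ⟨.leaf .fls, rfl, Language.ext fun _ => ⟨fun ⟨_, _, _, h⟩ => h.elim, False.elim⟩⟩

theorem ADT0Definable.sup {L M : Language (Val P)} (hL : ADT0Definable L)
    (hM : ADT0Definable M) : ADT0Definable (L ⊔ M) := by
  obtain ⟨t, ht, rfl⟩ := hL
  obtain ⟨s, hs, rfl⟩ := hM
  exact ⟨.orA t s, by simp [cd, ht, hs], rfl⟩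

theorem adt0Definable_biSup {ι : Type} {S : Set ι} (hS : S.Finite)
    {F : ι → Language (Val P)} (hF : ∀ i ∈ S, ADT0Definable (F i)) :
    ADT0Definable (⨆ i ∈ S, F i) := by
  induction S, hS using Set.Finite.induction_on with
  | empty => simpa using adt0Definable_bot
  | @insert i S _ _ ih =>
    rw [iSup_insert]
    exact (hF i (.inl rfl)).sup (ih fun j hj => hF j (.inr hj))

open Classical in
noncomputable def letterForm [Fintype P] (a : Val P) : PropForm P :=
  Finset.univ.toList.foldr (fun p φ => .conj (if p ∈ a then .var p else .neg (.var p)) φ) .tru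

theorem eval_letterForm [Fintype P] (a v : Val P) : (letterForm a).eval v ↔ v = a := by
  classical
  have key : ∀ l : List P, PropForm.eval v (l.foldr
      (fun p φ => .conj (if p ∈ a then .var p else .neg (.var p)) φ) .tru) ↔
      ∀ p ∈ l, (p ∈ v ↔ p ∈ a) := by
    intro l
    induction l with
    | nil => simp [PropForm.eval]
    | cons p l ih => by_cases hp : p ∈ a <;> simp [PropForm.eval, ih, hp]
  simp only [letterForm, key, Finset.mem_toList, Finset.mem_univ, true_implies, Set.ext_iff]

noncomputable def superwordsADT [Fintype P] : List (Val P) → ADT P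
  | [] => .orA .eps (.leaf .tru)
  | a :: u => .sand (.leaf (letterForm a)) (superwordsADT u)

theorem sem_superwordsADT [Fintype P] (u : List (Val P)) :
    sem (superwordsADT u) = superwords u := by
  induction u with
  | nil =>
    ext w
    simp only [superwordsADT, sem, mem_superwords]
    refine ⟨fun _ => List.nil_sublist w, fun _ => ?_⟩
    rcases List.eq_nil_or_concat w with rfl | ⟨w', v, rfl⟩
    · exact Or.inl rfl
    · exact Or.inr ⟨w', v, by simp, trivial⟩
  | cons a u ih =>
    ext w
    change w ∈ sem (.leaf (letterForm a)) * sem (superwordsADT u) ↔ (a :: u).Sublist w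
    rw [Language.mem_mul, ih, List.cons_sublist_iff]
    constructor
    · rintro ⟨_, ⟨x, v, rfl, hv⟩, y, hy, rfl⟩
      rw [eval_letterForm] at hv
      subst hv
      exact ⟨x ++ [v], y, rfl, by simp, hy⟩
    · rintro ⟨r₁, r₂, rfl, ha, hu⟩
      obtain ⟨x, y, rfl⟩ := List.append_of_mem ha
      exact ⟨x ++ [a], ⟨x, a, rfl, (eval_letterForm a a).2 rfl⟩, y ++ r₂,
        hu.trans (List.sublist_append_right y r₂), by simp⟩

theorem adt0Definable_superwords [Fintype P] (u : List (Val P)) :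
    ADT0Definable (superwords u) := by
  refine ⟨superwordsADT u, ?_, sem_superwordsADT u⟩
  induction u with
  | nil => rfl
  | cons a u ih => simp [superwordsADT, cd, ih]

/-- Every `Σ₁`-definable language over `Σ = 2^P` is ADT₀-definable. -/
theorem sigma1_to_ADT0 {P : Type} [Fintype P] (L : Language (Val P))
    (hL : SigmaDefinable 1 L) :
    ∃ t : ADT P, cd t = 0 ∧ sem t = L := by
  obtain ⟨n, hn⟩ := hL.exists_mem_iff_exists_short_sublist
  have hL_eq : L = ⨆ u ∈ {u | u ∈ L ∧ u.length ≤ n}, superwords u := by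
    ext w
    simp only [hn w, Language.mem_iSup, mem_superwords, Set.mem_ofPred_eq, exists_prop,
      and_assoc]
  rw [hL_eq]
  exact adt0Definable_biSup ((List.finite_length_le _ n).subset fun _ hu => hu.2)
    fun u _ => adt0Definable_superwords u

end ADTpaper
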